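/- arXiv:math/9302203 — 4 statements merged into one kernel-verified Lean document; each statement's English description precedes it below -/
import Mathlib

section
/- Let U be a nonprincipal p-point ultrafilter on ℕ. Then player I does not have a winning strategy in the game G_U. That is, for every function σ from finite sequences of finite subsets of ℕ to subsets of ℕ such that, for every sequence ⟨F_n⟩ of finite sets with F_n ⊆ σ(⟨F_0,…,F_{n-1}⟩) for all n, the sets σ(⟨⟩), σ(⟨F_0⟩), σ(⟨F_0,F_1⟩), … are pairwise disjoint, each not in U, and have union ℕ, there exists a sequence ⟨F_n⟩ of finite sets with F_n ⊆ σ(⟨F_0,…,F_{n-1}⟩) for all n such that ⋃_n F_n ∈ U. -/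
/-- `U` is nonprincipal: it contains no finite set. -/
def Nonprincipal (U : Ultrafilter ℕ) : Prop :=
  ∀ A : Set ℕ, A.Finite → A ∉ U

/-- `U` is a p-point: for every sequence of elements of `U` there is an `X ∈ U`
almost contained in each of them. -/
def IsPPoint (U : Ultrafilter ℕ) : Prop :=
  ∀ A : ℕ → Set ℕ, (∀ n, A n ∈ U) → ∃ X ∈ U, ∀ n, (X \ A n).Finite

/-- A play `F` of player II is consistent with player I's strategy `σ`
if at each stage `n` the finite set `F n` is contained in the set
`σ ⟨F 0, …, F (n-1)⟩` just played by player I. -/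
def ConsistentPlay (σ : List (Finset ℕ) → Set ℕ) (F : ℕ → Finset ℕ) : Prop :=
  ∀ n, ↑(F n) ⊆ σ ((List.range n).map F)

/-- `σ` is a legal strategy for player I: against every play of player II the
sets it produces are pairwise disjoint, lie outside `U`, and cover `ℕ`. -/
def LegalStrategyI (U : Ultrafilter ℕ) (σ : List (Finset ℕ) → Set ℕ) : Prop :=
  ∀ F : ℕ → Finset ℕ, ConsistentPlay σ F →
    (∀ m n, m ≠ n → Disjoint (σ ((List.range m).map F)) (σ ((List.range n).map F))) ∧
    (∀ n, σ ((List.range n).map F) ∉ U) ∧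
    (⋃ n, σ ((List.range n).map F)) = Set.univ

open Classical

/-- Player II's move at a position `p`: take `X ∩ σ p` if it is finite,
otherwise the empty set. -/

noncomputable def IImove (X : Set ℕ) (σ : List (Finset ℕ) → Set ℕ)
    (p : List (Finset ℕ)) : Finset ℕ :=
  if h : (X ∩ σ p).Finite then h.toFinset else ∅

lemma IImove_subset (X : Set ℕ) (σ : List (Finset ℕ) → Set ℕ) (p : List (Finset ℕ)) :
    ↑(IImove X σ p) ⊆ σ p := by
  classical
  unfold IImove
  split
  · next h => intro x hx; simp only [Set.Finite.coe_toFinset] at hx; exact hx.2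
  · simp

/-- The position after `n` moves of the induced play. -/
noncomputable def IIpos (X : Set ℕ) (σ : List (Finset ℕ) → Set ℕ) : ℕ → List (Finset ℕ)
  | 0 => []
  | n + 1 => IIpos X σ n ++ [IImove X σ (IIpos X σ n)]

/-- The induced play of player II. -/
noncomputable def IIplay (X : Set ℕ) (σ : List (Finset ℕ) → Set ℕ) (n : ℕ) : Finset ℕ :=
  IImove X σ (IIpos X σ n)

lemma IIpos_eq (X : Set ℕ) (σ : List (Finset ℕ) → Set ℕ) (n : ℕ) :
    IIpos X σ n = (List.range n).map (IIplay X σ) := by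
  induction n with
  | zero => simp [IIpos]
  | succ n ih =>
    rw [IIpos, ih, List.range_succ, List.map_append]
    simp [IIplay, ih]

lemma IIplay_consistent (X : Set ℕ) (σ : List (Finset ℕ) → Set ℕ) :
    ConsistentPlay σ (IIplay X σ) := by
  intro n
  rw [← IIpos_eq]
  exact IImove_subset X σ _

theorem playerI_no_winning_strategy
    (U : Ultrafilter ℕ) (hNP : Nonprincipal U) (hPP : IsPPoint U)
    (σ : List (Finset ℕ) → Set ℕ) (hσ : LegalStrategyI U σ) :
    ∃ F : ℕ → Finset ℕ, ConsistentPlay σ F ∧ (⋃ n, ↑(F n) : Set ℕ) ∈ U := by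
  classical
  -- The sequence of sets for the p-point property: complements of all values
  -- of σ not in U, indexed through an encoding of positions.
  set A : ℕ → Set ℕ := fun n =>
    (Encodable.decode n : Option (List (Finset ℕ))).elim Set.univ
      (fun p => if σ p ∈ U then Set.univ else (σ p)ᶜ) with hA
  have hAU : ∀ n, A n ∈ U := by
    intro n
    rw [hA]
    cases hd : (Encodable.decode n : Option (List (Finset ℕ))) with
    | none => simp only [hd, Option.elim]; exact Filter.univ_mem
    | some p =>
      simp only [hd, Option.elim]
      split
      · exact Filter.univ_mem
      · next h => exact Ultrafilter.compl_mem_iff_notMem.mpr h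
  obtain ⟨X, hXU, hXA⟩ := hPP A hAU
  -- Key: X ∩ σ p is finite whenever σ p ∉ U.
  have hfin : ∀ p : List (Finset ℕ), σ p ∉ U → (X ∩ σ p).Finite := by
    intro p hp
    have := hXA (Encodable.encode p)
    rw [hA] at this
    simp only [Encodable.encodek, Option.elim] at this
    rw [if_neg hp] at this
    have he : X \ (σ p)ᶜ = X ∩ σ p := by ext x; simp
    rwa [he] at this
  refine ⟨IIplay X σ, IIplay_consistent X σ, ?_⟩
  obtain ⟨_, hnotU, hcover⟩ := hσ (IIplay X σ) (IIplay_consistent X σ)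
  -- Each move is exactly X ∩ σ(position).
  have hmove : ∀ n, (IIplay X σ n : Set ℕ) = X ∩ σ ((List.range n).map (IIplay X σ)) := by
    intro n
    have hf : (X ∩ σ ((List.range n).map (IIplay X σ))).Finite := hfin _ (hnotU n)
    classical
    rw [IIplay, IIpos_eq, IImove]
    rw [dif_pos hf, Set.Finite.coe_toFinset]
  -- X is contained in the union of the moves.
  refine Filter.mem_of_superset hXU ?_
  intro x hx
  have hxuniv : x ∈ ⋃ n, σ ((List.range n).map (IIplay X σ)) := hcover ▸ Set.mem_univ x
  obtain ⟨n, hn⟩ := Set.mem_iUnion.mp hxuniv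
  exact Set.mem_iUnion.mpr ⟨n, (hmove n) ▸ ⟨hx, hn⟩⟩
end

section
/- Let U be a nonprincipal p-point ultrafilter on ℕ and let μ be a winning strategy for player II in the game G_U (i.e., μ assigns to each finite nonempty sequence ⟨I_0,…,I_n⟩ of subsets of ℕ a finite set μ(I_0,…,I_n) ⊆ I_n, and for every sequence ⟨I_n⟩ of pairwise disjoint subsets of ℕ, each not in U, with union ℕ, one has ⋃_n μ(I_0,…,I_n) ∈ U). Then for every n ∈ ℕ and every sequence I_0, I_1, …, I_n of pairwise disjoint subsets of ℕ each not belonging to U, there exists Y ∈ U with Y ⊆ ℕ \ (I_0 ∪ … ∪ I_n) such that for every finite set t ⊆ Y there exists a set I ∉ U with t ⊆ I ⊆ ℕ \ (I_0 ∪ … ∪ I_n) and μ(I_0,…,I_n,I) ∩ t = ∅. -/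
/-- `μ` is a legal strategy for player II: to each nonempty finite sequence
`⟨I_0,…,I_n⟩` of moves of player I it assigns a finite subset of the last
move `I_n`. -/
def LegalStrategyII (μ : List (Set ℕ) → Finset ℕ) : Prop :=
  ∀ (l : List (Set ℕ)) (I : Set ℕ), ↑(μ (l ++ [I])) ⊆ I

/-- `μ` is a winning strategy for player II: for every partition of `ℕ` into
pairwise disjoint sets outside `U` played by player I, the union of player
II's responses via `μ` belongs to `U`. -/
def WinningStrategyII (U : Ultrafilter ℕ) (μ : List (Set ℕ) → Finset ℕ) : Prop :=
  LegalStrategyII μ ∧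
    ∀ I : ℕ → Set ℕ,
      (∀ m n, m ≠ n → Disjoint (I m) (I n)) →
      (∀ n, I n ∉ U) →
      (⋃ n, I n) = Set.univ →
      (⋃ n, ↑(μ ((List.range (n + 1)).map I)) : Set ℕ) ∈ U

/-- Auxiliary: accumulate finite sets produced by `g`. -/
private def accumFinsets (g : Finset ℕ → Finset ℕ) : ℕ → Finset ℕ
  | 0 => ∅
  | k + 1 => accumFinsets g k ∪ g (accumFinsets g k)

theorem claim_for_winning_strategyII
    (U : Ultrafilter ℕ) (hNP : Nonprincipal U) (hPP : IsPPoint U)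
    (μ : List (Set ℕ) → Finset ℕ) (hμ : WinningStrategyII U μ)
    (n : ℕ) (I : Fin (n + 1) → Set ℕ)
    (hdisj : ∀ i j, i ≠ j → Disjoint (I i) (I j))
    (hI : ∀ i, I i ∉ U) :
    ∃ Y ∈ U, Y ⊆ (⋃ i, I i)ᶜ ∧
      ∀ t : Finset ℕ, ↑t ⊆ Y →
        ∃ J : Set ℕ, J ∉ U ∧ ↑t ⊆ J ∧ J ⊆ (⋃ i, I i)ᶜ ∧
          (↑(μ (List.ofFn I ++ [J])) ∩ (↑t : Set ℕ)) = ∅ := by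
  classical
  set C : Set ℕ := (⋃ i, I i)ᶜ with hCdef
  -- C belongs to U
  have hC : C ∈ U := by
    rw [hCdef, Ultrafilter.compl_mem_iff_notMem]
    intro hmem
    have : (⋃ i ∈ (Set.univ : Set (Fin (n+1))), I i) ∈ U := by
      simpa using hmem
    rcases (Ultrafilter.finite_biUnion_mem_iff Set.finite_univ).mp this with ⟨i, -, hiU⟩
    exact hI i hiU
  by_contra hcon
  push_neg at hcon
  -- every U-subset of C contains a "bad" finite set
  have key : ∀ s : Finset ℕ, ∃ t : Finset ℕ, ↑t ⊆ C \ ↑s ∧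
      ∀ J : Set ℕ, J ∉ U → ↑t ⊆ J → J ⊆ C →
        (↑(μ (List.ofFn I ++ [J])) ∩ (↑t : Set ℕ)).Nonempty := by
    intro s
    have hsU : (↑s : Set ℕ)ᶜ ∈ U :=
      (Ultrafilter.compl_mem_iff_notMem).mpr (hNP _ s.finite_toSet)
    have hY : C \ ↑s ∈ U := by
      rw [Set.diff_eq]
      exact Filter.inter_mem hC hsU
    obtain ⟨t, ht1, ht2⟩ := hcon (C \ ↑s) hY Set.diff_subset
    exact ⟨t, ht1, ht2⟩
  choose g hg1 hg2 using key
  -- greedy sequence of accumulated finite sets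
  set s : ℕ → Finset ℕ := accumFinsets g with hs
  have hs_succ : ∀ k, s (k + 1) = s k ∪ g (s k) := fun _ => rfl
  set t : ℕ → Finset ℕ := fun k => g (s k) with ht
  have ht_sub : ∀ k, (↑(t k) : Set ℕ) ⊆ C \ (↑(s k) : Set ℕ) := fun k => hg1 (s k)
  have hsub : ∀ j k, j < k → (t j : Set ℕ) ⊆ (↑(s k) : Set ℕ) := by
    intro j k hjk
    induction k with
    | zero => omega
    | succ m ih =>
      rw [hs_succ m]
      push_cast
      rcases Nat.lt_succ_iff_lt_or_eq.mp hjk with h | h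
      · exact (ih h).trans Set.subset_union_left
      · subst h; exact Set.subset_union_right
  -- pairwise disjointness of the bad sets
  have hdis : ∀ j k, j ≠ k → ∀ x : ℕ, x ∈ t j → x ∈ t k → False := by
    have aux : ∀ j k, j < k → ∀ x : ℕ, x ∈ t j → x ∈ t k → False := by
      intro j k hjk x hxj hxk
      have h1 : x ∈ (↑(s k) : Set ℕ) := hsub j k hjk (by exact_mod_cast hxj)
      have h2 := ht_sub k (by exact_mod_cast hxk)
      exact h2.2 h1
    intro j k hjk x hxj hxk
    rcases Nat.lt_or_ge j k with h | h
    · exact aux j k h x hxj hxk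
    · exact aux k j (by omega) x hxk hxj
  -- given an injective index selection whose union is not in U, contradiction
  have final : ∀ e : ℕ → ℕ, Function.Injective e →
      (⋃ k, (↑(t (e k)) : Set ℕ)) ∉ U → False := by
    intro e he hJ
    set J : Set ℕ := ⋃ k, (↑(t (e k)) : Set ℕ) with hJdef
    have hJC : J ⊆ C := by
      rw [hJdef]
      exact Set.iUnion_subset fun k => (ht_sub (e k)).trans Set.diff_subset
    have hbad : ∀ k, (↑(μ (List.ofFn I ++ [J])) ∩ (↑(t (e k)) : Set ℕ)).Nonempty := by
      intro k
      exact hg2 (s (e k)) J hJ (Set.subset_iUnion (fun k => (↑(t (e k)) : Set ℕ)) k) hJC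
    choose a ha using hbad
    have hainj : Function.Injective a := by
      intro k k' hkk'
      by_contra hne
      have hek : e k ≠ e k' := fun h => hne (he h)
      exact hdis (e k) (e k') hek (a k) (by exact_mod_cast (ha k).2)
        (by exact_mod_cast (hkk' ▸ (ha k').2))
    have hinf : (↑(μ (List.ofFn I ++ [J])) : Set ℕ).Infinite :=
      Set.infinite_of_injective_forall_mem hainj fun k => (ha k).1
    exact hinf (Finset.finite_toSet _)
  -- one of the even/odd unions is not in U
  have hdisjEO : (⋃ k, (↑(t (2*k)) : Set ℕ)) ∩ (⋃ k, (↑(t (2*k+1)) : Set ℕ)) = ∅ := by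
    ext x
    simp only [Set.mem_inter_iff, Set.mem_iUnion, Set.mem_empty_iff_false, iff_false]
    rintro ⟨⟨k, hk⟩, ⟨k', hk'⟩⟩
    exact hdis (2*k) (2*k'+1) (by omega) x (by exact_mod_cast hk) (by exact_mod_cast hk')
  by_cases hE : (⋃ k, (↑(t (2*k)) : Set ℕ)) ∈ U
  · have hO : (⋃ k, (↑(t (2*k+1)) : Set ℕ)) ∉ U := by
      intro hO
      have := Filter.inter_mem hE hO
      rw [hdisjEO] at this
      exact Filter.empty_notMem _ this
    exact final (fun k => 2*k+1) (fun a b h => by dsimp only at h; omega) hO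
  · exact final (fun k => 2*k) (fun a b h => by dsimp only at h; omega) hE
end

section
/- Let U be a nonprincipal p-point ultrafilter on ℕ. Every I-p-tree has an I-p-branch: if A is a nonempty set of finite sequences of finite subsets of ℕ that is closed under taking initial segments, and for every s ∈ A there exists X ∈ U such that every finite subset a of X satisfies s⌢⟨a⟩ ∈ A, then there exists a function H : ℕ → (finite subsets of ℕ) such that for every n the sequence ⟨H(0),…,H(n-1)⟩ belongs to A and ⋃_{n ∈ ℕ} H(n) ∈ U. -/
/-- Lists of bounded length with entries in a finite set form a finite set. -/
lemma finite_lists_of_bounded {α : Type*} (T : Set α) (hT : T.Finite) :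
    ∀ k : ℕ, {s : List α | s.length ≤ k ∧ ∀ a ∈ s, a ∈ T}.Finite := by
  intro k
  induction k with
  | zero =>
    apply Set.Finite.subset (Set.finite_singleton ([] : List α))
    rintro s ⟨hlen, -⟩
    simp [List.length_eq_zero_iff.mp (Nat.le_zero.mp hlen)]
  | succ k ih =>
    apply Set.Finite.subset
      ((Set.finite_singleton ([] : List α)).union
        (Set.Finite.image2 List.cons hT ih))
    rintro s ⟨hlen, hmem⟩
    cases s with
    | nil => exact Or.inl rfl
    | cons a t =>
      refine Or.inr (Set.mem_image2.mpr ⟨a, hmem a (by simp), t,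
        ⟨?_, fun b hb => hmem b (by simp [hb])⟩, rfl⟩)
      simpa using Nat.succ_le_succ_iff.mp hlen

theorem Ip_tree_has_Ip_branch
    (U : Ultrafilter ℕ) (hNP : Nonprincipal U) (hPP : IsPPoint U)
    (A : Set (List (Finset ℕ)))
    (hne : A.Nonempty)
    (hclosed : ∀ s ∈ A, ∀ t : List (Finset ℕ), t <+: s → t ∈ A)
    (hram : ∀ s ∈ A, ∃ X ∈ U, ∀ a : Finset ℕ, ↑a ⊆ X → s ++ [a] ∈ A) :
    ∃ H : ℕ → Finset ℕ,
      (∀ n, (List.range n).map H ∈ A) ∧ (⋃ n, ↑(H n) : Set ℕ) ∈ U := by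
  classical
  -- the empty list is in A
  have hnil : ([] : List (Finset ℕ)) ∈ A := by
    obtain ⟨s, hs⟩ := hne
    exact hclosed s hs [] ⟨s, rfl⟩
  -- choose, for each s, a witness Y s ∈ U
  have hY : ∀ s : List (Finset ℕ), ∃ Y : Set ℕ, Y ∈ U ∧
      (s ∈ A → ∀ a : Finset ℕ, ↑a ⊆ Y → s ++ [a] ∈ A) := by
    intro s
    by_cases hs : s ∈ A
    · obtain ⟨X, hXU, hX⟩ := hram s hs
      exact ⟨X, hXU, fun _ => hX⟩
    · exact ⟨Set.univ, Filter.univ_mem, fun h => absurd h hs⟩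
  choose Y hYU hYA using hY
  -- surjective enumeration of all lists
  obtain ⟨e, he⟩ := exists_surjective_nat (List (Finset ℕ))
  -- apply the p-point property
  obtain ⟨X, hXU, hXfin⟩ := hPP (fun n => Y (e n)) (fun n => hYU (e n))
  have hXfin' : ∀ s, (X \ Y s).Finite := by
    intro s; obtain ⟨n, rfl⟩ := he s; exact hXfin n
  -- the bound function g
  have hg : ∀ t : ℕ, ∃ M : ℕ, ∀ s : List (Finset ℕ),
      s.length ≤ t → (∀ a ∈ s, (a : Set ℕ) ⊆ Set.Iio t) →
      X \ Y s ⊆ Set.Iio M := by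
    intro t
    have hfin : {s : List (Finset ℕ) | s.length ≤ t ∧
        ∀ a ∈ s, a ∈ {a : Finset ℕ | (a : Set ℕ) ⊆ Set.Iio t}}.Finite := by
      apply finite_lists_of_bounded
      apply Set.Finite.subset ((Finset.range t : Finset ℕ).powerset : Finset (Finset ℕ)).finite_toSet
      intro a ha
      simp only [Finset.coe_powerset, Set.mem_preimage, Set.mem_powerset_iff,
        Finset.coe_range]
      exact ha
    have hfin2 : (⋃ s ∈ {s : List (Finset ℕ) | s.length ≤ t ∧
        ∀ a ∈ s, a ∈ {a : Finset ℕ | (a : Set ℕ) ⊆ Set.Iio t}}, X \ Y s).Finite :=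
      Set.Finite.biUnion hfin (fun s _ => hXfin' s)
    obtain ⟨M, hM⟩ := hfin2.bddAbove
    refine ⟨M + 1, fun s h1 h2 x hx => ?_⟩
    have : x ≤ M := hM (Set.mem_biUnion ⟨h1, h2⟩ hx)
    exact Nat.lt_succ_of_le this
  choose g hgspec using hg
  -- the interval endpoints m
  let m : ℕ → ℕ := fun k => Nat.rec 0 (fun k mk => max (mk + 1) (g mk)) k
  have hm_succ : ∀ k, m (k + 1) = max (m k + 1) (g (m k)) := fun k => rfl
  have hm_lt : ∀ k, m k < m (k + 1) := fun k =>
    lt_of_lt_of_le (Nat.lt_succ_self _) (by rw [hm_succ]; exact le_max_left _ _)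
  have hm_mono : StrictMono m := strictMono_nat_of_lt_succ hm_lt
  have hm_ge : ∀ k, k ≤ m k := fun k => by
    induction k with
    | zero => exact Nat.zero_le _
    | succ k ih => exact lt_of_le_of_lt ih (hm_lt k)
  have hm0 : m 0 = 0 := rfl
  clear_value m
  -- the key bound property
  have hmF : ∀ k, ∀ s : List (Finset ℕ), s.length ≤ m k →
      (∀ a ∈ s, (a : Set ℕ) ⊆ Set.Iio (m k)) → X \ Y s ⊆ Set.Iio (m (k + 1)) := by
    intro k s h1 h2
    refine (hgspec (m k) s h1 h2).trans ?_
    intro x hx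
    simp only [Set.mem_Iio] at hx ⊢
    exact lt_of_lt_of_le hx (by rw [hm_succ]; exact le_max_right _ _)
  -- the intervals
  let I : ℕ → Finset ℕ := fun j => (Finset.Ico (m j) (m (j + 1))).filter (· ∈ X)
  have hI_mem : ∀ j x, x ∈ I j ↔ (m j ≤ x ∧ x < m (j + 1)) ∧ x ∈ X := by
    intro j x; simp [I, Finset.mem_filter, Finset.mem_Ico, and_assoc]
  -- bound on entries of I
  have hI_lt : ∀ j x, x ∈ I j → x < m (j + 1) := fun j x hx => ((hI_mem j x).mp hx).1.2
  have hI_ge : ∀ j x, x ∈ I j → m j ≤ x := fun j x hx => ((hI_mem j x).mp hx).1.1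
  have hI_X : ∀ j x, x ∈ I j → x ∈ X := fun j x hx => ((hI_mem j x).mp hx).2
  clear_value I
  -- the two candidate branches, parametrized by q : branch n = I (2n + q + 1)
  have branch_mem : ∀ q : ℕ, ∀ n : ℕ,
      (List.range n).map (fun i => I (2 * i + q + 1)) ∈ A := by
    intro q n
    induction n with
    | zero => simpa using hnil
    | succ n ih =>
      rw [List.range_succ, List.map_append]
      set s := (List.range n).map (fun i => I (2 * i + q + 1)) with hs_def
      -- s has length n and entries bounded by m (2n + q)
      have hlen : s.length = n := by simp [hs_def]
      have hentries : ∀ a ∈ s, (a : Set ℕ) ⊆ Set.Iio (m (2 * n + q)) := by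
        intro a ha
        rw [hs_def, List.mem_map] at ha
        obtain ⟨i, hi, rfl⟩ := ha
        rw [List.mem_range] at hi
        intro x hx
        have h1 : x < m (2 * i + q + 1 + 1) := hI_lt _ x (Finset.mem_coe.mp hx)
        have h2 : 2 * i + q + 1 + 1 ≤ 2 * n + q := by omega
        exact lt_of_lt_of_le h1 (hm_mono.monotone h2)
      have hF : X \ Y s ⊆ Set.Iio (m (2 * n + q + 1)) := by
        apply hmF (2 * n + q) s
        · rw [hlen]; exact le_trans (by omega) (hm_ge (2 * n + q))
        · exact hentries
      -- I (2n + q + 1) ⊆ Y s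
      have hsub : (↑(I (2 * n + q + 1)) : Set ℕ) ⊆ Y s := by
        intro x hx
        have hxX : x ∈ X := hI_X _ x (Finset.mem_coe.mp hx)
        have hxge : m (2 * n + q + 1) ≤ x := hI_ge _ x (Finset.mem_coe.mp hx)
        by_contra hxY
        exact absurd (hF ⟨hxX, hxY⟩) (not_lt.mpr hxge)
      simpa using hYA s ih (I (2 * n + q + 1)) hsub
  -- the union of all intervals with index ≥ 1 covers X ∩ [m 1, ∞)
  have hcover : X ∩ Set.Ici (m 1) ⊆
      (⋃ n, (↑(I (2 * n + 0 + 1)) : Set ℕ)) ∪ (⋃ n, (↑(I (2 * n + 1 + 1)) : Set ℕ)) := by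
    rintro x ⟨hxX, hxge⟩
    -- find j with m j ≤ x < m (j+1)
    have hex : ∃ N, x < m N := ⟨x + 1, lt_of_lt_of_le (Nat.lt_succ_self x) (hm_ge (x + 1))⟩
    let N := Nat.find hex
    have hN : x < m N := Nat.find_spec hex
    have hNpos : 2 ≤ N := by
      by_contra h
      interval_cases N
      · have := hN; omega
      · exact absurd hN (not_lt.mpr hxge)
    have hj : m (N - 1) ≤ x := by
      have := Nat.find_min hex (m := N - 1) (by omega)
      omega
    set j := N - 1 with hj_def
    have hjN : j + 1 = N := by omega
    have hjx : x ∈ I j := (hI_mem j x).mpr ⟨⟨hj, by rw [hjN]; exact hN⟩, hxX⟩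
    have hj1 : 1 ≤ j := by omega
    rcases Nat.even_or_odd (j - 1) with ⟨n, hn⟩ | ⟨n, hn⟩
    · left
      refine Set.mem_iUnion.mpr ⟨n, ?_⟩
      have : 2 * n + 0 + 1 = j := by omega
      rw [this]; exact_mod_cast hjx
    · right
      refine Set.mem_iUnion.mpr ⟨n, ?_⟩
      have : 2 * n + 1 + 1 = j := by omega
      rw [this]; exact_mod_cast hjx
  -- X ∩ [m 1, ∞) ∈ U
  have hXIci : X ∩ Set.Ici (m 1) ∈ U := by
    apply Filter.inter_mem hXU
    have hfin : (Set.Iio (m 1)).Finite := Set.finite_Iio _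
    have : Set.Iio (m 1) ∉ U := hNP _ hfin
    have := (Ultrafilter.compl_mem_iff_notMem).mpr this
    rwa [Set.compl_Iio] at this
  -- one of the two unions is in U
  have hunion : (⋃ n, (↑(I (2 * n + 0 + 1)) : Set ℕ)) ∪
      (⋃ n, (↑(I (2 * n + 1 + 1)) : Set ℕ)) ∈ U :=
    Filter.mem_of_superset hXIci hcover
  rcases (Ultrafilter.union_mem_iff.mp hunion) with h | h
  · exact ⟨fun n => I (2 * n + 0 + 1), branch_mem 0, h⟩
  · exact ⟨fun n => I (2 * n + 1 + 1), branch_mem 1, h⟩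
end

section
/- Let U be a nonprincipal ultrafilter on ℕ that is not a p-point. Then player I has a winning strategy in the game G_U: there exists a function σ from finite sequences of finite subsets of ℕ to subsets of ℕ such that, for every sequence ⟨F_n⟩ of finite sets with F_n ⊆ σ(⟨F_0,…,F_{n-1}⟩) for all n, the sets σ(⟨⟩), σ(⟨F_0⟩), σ(⟨F_0,F_1⟩), … are pairwise disjoint, each not in U, have union ℕ, and ⋃_n F_n ∉ U. -/
theorem playerI_wins_if_not_ppoint
    (U : Ultrafilter ℕ) (hNP : Nonprincipal U) (hPP : ¬ IsPPoint U) :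
    ∃ σ : List (Finset ℕ) → Set ℕ,
      ∀ F : ℕ → Finset ℕ, ConsistentPlay σ F →
        (∀ m n, m ≠ n → Disjoint (σ ((List.range m).map F)) (σ ((List.range n).map F))) ∧
        (∀ n, σ ((List.range n).map F) ∉ U) ∧
        (⋃ n, σ ((List.range n).map F)) = Set.univ ∧
        (⋃ n, ↑(F n) : Set ℕ) ∉ U := by
  classical
  rw [IsPPoint] at hPP
  push_neg at hPP
  obtain ⟨A, hA, hX⟩ := hPP
  -- decreasing intersections, with {k} removed so every point escapes
  set B : ℕ → Set ℕ := fun n => ⋂ k ∈ Finset.range (n+1), (A k \ {k}) with hBdef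
  have hB : ∀ n, B n ∈ U := by
    intro n
    apply (Filter.biInter_finset_mem _).mpr
    intro k _
    exact Filter.diff_mem (hA k)
      (Ultrafilter.compl_mem_iff_notMem.mpr (hNP {k} (Set.finite_singleton k)))
  have hBsub : ∀ {k n : ℕ}, k ≤ n → B n ⊆ A k \ {k} := by
    intro k n hkn x hx
    simp only [hBdef, Set.mem_iInter] at hx
    exact hx k (Finset.mem_range.mpr (Nat.lt_succ_of_le hkn))
  have hex : ∀ x : ℕ, ∃ n, x ∉ B n := by
    intro x
    refine ⟨x, fun hx => ?_⟩
    exact (hBsub le_rfl hx).2 rfl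
  refine ⟨fun l => {x : ℕ | Nat.find (hex x) = l.length}, fun F hF => ?_⟩
  have hnotmem : ∀ n, {x : ℕ | Nat.find (hex x) = n} ∉ U := by
    intro n hn
    have hsub : {x : ℕ | Nat.find (hex x) = n} ⊆ (B n)ᶜ := by
      intro x hx
      have := Nat.find_spec (hex x)
      rwa [hx] at this
    have h1 : (B n)ᶜ ∈ U := Filter.mem_of_superset hn hsub
    have h2 := Filter.inter_mem (hB n) h1
    rw [Set.inter_compl_self] at h2
    exact hNP ∅ Set.finite_empty h2
  simp only [List.length_map, List.length_range, Set.mem_setOf_eq]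
  refine ⟨?_, ?_, ?_, ?_⟩
  · intro m n hmn
    rw [Set.disjoint_left]
    intro x hxm hxn
    simp only [Set.mem_setOf_eq, List.length_map, List.length_range] at hxm hxn
    exact hmn (hxm ▸ hxn ▸ rfl)
  · intro n
    simpa only [List.length_map, List.length_range] using hnotmem n
  · apply Set.eq_univ_of_forall
    intro x
    refine Set.mem_iUnion.mpr ⟨Nat.find (hex x), ?_⟩
    simp
  · intro hmem
    obtain ⟨n, hinf⟩ := hX _ hmem
    apply hinf
    have hsub : (⋃ k, ↑(F k) : Set ℕ) \ A n ⊆ ⋃ k ∈ Finset.range (n+1), (F k : Set ℕ) := by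
      intro x hx
      obtain ⟨hk, hxA⟩ := hx
      rw [Set.mem_iUnion] at hk
      obtain ⟨m, hm⟩ := hk
      simp only [Set.mem_iUnion]
      refine ⟨m, Finset.mem_range.mpr ?_, hm⟩
      by_contra h
      push_neg at h
      have hfind : Nat.find (hex x) = m := by
        have := hF m hm
        simp only [Set.mem_setOf_eq, List.length_map, List.length_range] at this
        exact this
      have hxBn : x ∈ B n := by
        by_contra hxBn
        have := Nat.find_min' (hex x) hxBn
        omega
      exact hxA (hBsub le_rfl hxBn).1
    exact Set.Finite.subset (Set.Finite.biUnion (Finset.finite_toSet _)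
      (fun k _ => (F k).finite_toSet)) hsub
end
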